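/- Let H be a group, Ω(H) = ((S, 1_S, ∗), ◁, ▷, f) a group extending structure of H, and (H, G, ▷', ◁') a matched pair of groups with bicrossed product H ⋈ G. Then the following are equivalent: (1) there exists an isomorphism of groups ψ : H ⋉ S → H ⋈ G with ψ(h, 1_S) = (h, 1_G) for all h ∈ H; (2) there exist a unitary map r : S → H and a bijective unitary map v : S → G with v(s ◁ h) = v(s) ◁' h for all s ∈ S, h ∈ H (an isomorphism of right H-sets), such that (s ▷ h) r(s ◁ h) = r(s) (v(s) ▷' h), v(s₁ ∗ s₂) = (v(s₁) ◁' r(s₂)) v(s₂), and f(s₁, s₂) = r(s₁) (v(s₁) ▷' r(s₂)) r(s₁ ∗ s₂)⁻¹ for all s, s₁, s₂ ∈ S and h ∈ H. -/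

import Mathlib

/-!
An isomorphism `ψ : H ⋉ S → H ⋈ G` fixing `H` is determined by its values on `{1} × S`: since
`(h, s) = (h, 1_S) · (1_H, s)`, writing `ψ (1, s) = (r s, v s)` forces `ψ (h, s) = (h r(s), v(s))`.
Such a map is bijective exactly when `v` is, and multiplicativity on the products
`(1, s) · (h, 1)` and `(1, s₁) · (1, s₂)` is exactly the stated compatibilities between `(r, v)` and
the two structures; conversely, the matched-pair axioms for `▷'` and `◁'` propagate these
compatibilities to multiplicativity on arbitrary products.
-/

universe u v

/-- An extending datum `Ω(H) = ((S, 1_S, ∗), ◁, ▷, f)` of a group `H`: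
a pointed set `(S, one)`, a binary operation `mul = ∗` with unit `one`,
maps `act = ◁ : S × H → S`, `rho = ▷ : S × H → H`, `f : S × S → H`
satisfying the normalization conditions. -/
structure ExtendingDatum (H : Type u) [Group H] (S : Type v) where
  one : S
  mul : S → S → S
  act : S → H → S
  rho : S → H → H
  f : S → S → H
  mul_one' : ∀ s, mul s one = s
  one_mul' : ∀ s, mul one s = s
  act_one' : ∀ s, act s 1 = s
  one_act' : ∀ h, act one h = one
  one_rho' : ∀ h, rho one h = h
  rho_one' : ∀ s, rho s 1 = 1
  f_one_right' : ∀ s, f s one = 1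
  f_one_left' : ∀ s, f one s = 1

variable {H : Type u} [Group H] {S : Type v}

/-- The multiplication of the (prospective) unified product `H ⋉ S` on the set `H × S`:
`(h₁, s₁) · (h₂, s₂) = (h₁ (s₁ ▷ h₂) f(s₁ ◁ h₂, s₂), (s₁ ◁ h₂) ∗ s₂)`. -/
def ExtendingDatum.Mul (Ω : ExtendingDatum H S) (x y : H × S) : H × S :=
  (x.1 * Ω.rho x.2 y.1 * Ω.f (Ω.act x.2 y.1) y.2, Ω.mul (Ω.act x.2 y.1) y.2)

/-- `Ω` is a group extending structure of `H` when the multiplication `Ω.Mul` makes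
`H × S` a group with unit `(1_H, 1_S)` (a monoid in which every element has a left
inverse is a group). The resulting group is the unified product `H ⋉ S`. -/
def IsGroupExtendingStructure (Ω : ExtendingDatum H S) : Prop :=
  (∀ a b c : H × S, Ω.Mul (Ω.Mul a b) c = Ω.Mul a (Ω.Mul b c)) ∧
  (∀ a : H × S, Ω.Mul ((1 : H), Ω.one) a = a) ∧
  (∀ a : H × S, Ω.Mul a ((1 : H), Ω.one) = a) ∧
  (∀ a : H × S, ∃ b : H × S, Ω.Mul b a = ((1 : H), Ω.one))

namespace ExtendingDatum

variable (Ω : ExtendingDatum H S)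

theorem Mul_mk_one_one_mk (h : H) (s : S) : Ω.Mul (h, Ω.one) (1, s) = (h, s) := by
  simp [ExtendingDatum.Mul, Ω.act_one', Ω.f_one_left', Ω.one_mul', Ω.rho_one']

theorem Mul_one_mk_mk_one (s : S) (h : H) : Ω.Mul (1, s) (h, Ω.one) = (Ω.rho s h, Ω.act s h) := by
  simp [ExtendingDatum.Mul, Ω.f_one_right', Ω.mul_one']

theorem Mul_one_mk_one_mk (s₁ s₂ : S) : Ω.Mul (1, s₁) (1, s₂) = (Ω.f s₁ s₂, Ω.mul s₁ s₂) := by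
  simp [ExtendingDatum.Mul, Ω.rho_one', Ω.act_one']

end ExtendingDatum

section MatchedPair

variable {G K : Type*} [Group G] {rho' : G → K → K} {act' : G → K → G}

theorem act_one_left_eq_one (hla1 : ∀ k : K, rho' 1 k = k)
    (hc2 : ∀ (g₁ g₂ : G) (k : K), act' (g₁ * g₂) k = act' g₁ (rho' g₂ k) * act' g₂ k)
    (k : K) : act' 1 k = 1 := by
  simpa [hla1] using hc2 1 1 k

end MatchedPair

def bicrossedMul {G : Type*} [Mul G] (rho' : G → H → H) (act' : G → H → G)
    (x y : H × G) : H × G :=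
  (x.1 * rho' x.2 y.1, act' x.2 y.1 * y.2)

def twistedProdMap {G : Type*} (r : S → H) (v : S → G) (x : H × S) : H × G :=
  (x.1 * r x.2, v x.2)

section TwistedProdMap

variable {G : Type*} {r : S → H} {v : S → G}

theorem twistedProdMap_bijective_iff :
    Function.Bijective (twistedProdMap r v) ↔ Function.Bijective v := by
  constructor
  · intro hψ
    refine ⟨fun s₁ s₂ hv => ?_, fun g => ?_⟩
    · have : twistedProdMap r v (r s₂ * (r s₁)⁻¹, s₁) = twistedProdMap r v (1, s₂) := by
        simp [twistedProdMap, hv]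
      exact congrArg Prod.snd (hψ.1 this)
    · obtain ⟨⟨_, s⟩, hs⟩ := hψ.2 (1, g)
      exact ⟨s, congrArg Prod.snd hs⟩
  · intro hv
    refine ⟨fun ⟨h₁, s₁⟩ ⟨h₂, s₂⟩ hψ => ?_, fun ⟨h, g⟩ => ?_⟩
    · simp only [twistedProdMap, Prod.mk.injEq] at hψ
      obtain rfl : s₁ = s₂ := hv.1 hψ.2
      simpa using hψ.1
    · obtain ⟨s, rfl⟩ := hv.2 g
      exact ⟨(h * (r s)⁻¹, s), by simp [twistedProdMap]⟩

theorem twistedProdMap_mk_eq_mk_one_iff [One G] (s₀ : S) :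
    (∀ h : H, twistedProdMap r v (h, s₀) = (h, 1)) ↔ r s₀ = 1 ∧ v s₀ = 1 := by
  simp [twistedProdMap]

end TwistedProdMap

def IsBicrossedTwist {G : Type*} [Mul G] (Ω : ExtendingDatum H S)
    (rho' : G → H → H) (act' : G → H → G) (r : S → H) (v : S → G) : Prop :=
  (∀ (s : S) (h : H), v (Ω.act s h) = act' (v s) h) ∧
  (∀ (s : S) (h : H), Ω.rho s h * r (Ω.act s h) = r s * rho' (v s) h) ∧
  (∀ s₁ s₂ : S, v (Ω.mul s₁ s₂) = act' (v s₁) (r s₂) * v s₂) ∧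
  (∀ s₁ s₂ : S, Ω.f s₁ s₂ = r s₁ * rho' (v s₁) (r s₂) * (r (Ω.mul s₁ s₂))⁻¹)

section Bicrossed

variable {G : Type*} {rho' : G → H → H} {act' : G → H → G} {Ω : ExtendingDatum H S}

theorem eq_twistedProdMap_of_map_mul [MulOneClass G] {ψ : H × S → H × G}
    (hla1 : ∀ h : H, rho' 1 h = h) (hact1 : ∀ h : H, act' 1 h = 1)
    (hmul : ∀ a b : H × S, ψ (Ω.Mul a b) = bicrossedMul rho' act' (ψ a) (ψ b))
    (hunit : ∀ h : H, ψ (h, Ω.one) = (h, 1)) :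
    ∃ (r : S → H) (v : S → G), ψ = twistedProdMap r v := by
  refine ⟨fun s => (ψ (1, s)).1, fun s => (ψ (1, s)).2, funext fun ⟨h, s⟩ => ?_⟩
  have := hmul (h, Ω.one) (1, s)
  rw [Ω.Mul_mk_one_one_mk, hunit] at this
  simpa [twistedProdMap, bicrossedMul, hla1, hact1] using this

theorem isBicrossedTwist_of_map_mul [MulOneClass G] {r : S → H} {v : S → G} (hr : r Ω.one = 1)
    (hv : v Ω.one = 1)
    (hmul : ∀ a b : H × S, twistedProdMap r v (Ω.Mul a b) =
      bicrossedMul rho' act' (twistedProdMap r v a) (twistedProdMap r v b)) :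
    IsBicrossedTwist Ω rho' act' r v := by
  have hact (s : S) (h : H) := hmul (1, s) (h, Ω.one)
  have hmul' (s₁ s₂ : S) := hmul (1, s₁) (1, s₂)
  simp only [Ω.Mul_one_mk_mk_one, Ω.Mul_one_mk_one_mk, twistedProdMap, bicrossedMul, hr, hv,
    one_mul, mul_one, Prod.mk.injEq] at hact hmul'
  exact ⟨fun s h => (hact s h).2, fun s h => (hact s h).1, fun s₁ s₂ => (hmul' s₁ s₂).2,
    fun s₁ s₂ => eq_mul_inv_of_mul_eq (hmul' s₁ s₂).1⟩

theorem IsBicrossedTwist.map_mul [Mul G] {r : S → H} {v : S → G}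
    (hrv : IsBicrossedTwist Ω rho' act' r v)
    (hra2 : ∀ (g : G) (h₁ h₂ : H), act' g (h₁ * h₂) = act' (act' g h₁) h₂)
    (hc1 : ∀ (g : G) (h₁ h₂ : H), rho' g (h₁ * h₂) = rho' g h₁ * rho' (act' g h₁) h₂)
    (a b : H × S) :
    twistedProdMap r v (Ω.Mul a b) =
      bicrossedMul rho' act' (twistedProdMap r v a) (twistedProdMap r v b) := by
  obtain ⟨hva, hrr, hvm, hf⟩ := hrv
  obtain ⟨h₁, s₁⟩ := a
  obtain ⟨h₂, s₂⟩ := b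
  simp only [ExtendingDatum.Mul, twistedProdMap, bicrossedMul, Prod.mk.injEq]
  refine ⟨?_, by rw [hvm, hva, hra2]⟩
  calc h₁ * Ω.rho s₁ h₂ * Ω.f (Ω.act s₁ h₂) s₂ * r (Ω.mul (Ω.act s₁ h₂) s₂)
      = h₁ * (Ω.rho s₁ h₂ * r (Ω.act s₁ h₂)) * rho' (v (Ω.act s₁ h₂)) (r s₂) := by
        rw [hf]; group
    _ = h₁ * r s₁ * rho' (v s₁) (h₂ * r s₂) := by
        rw [hrr, hva, hc1]; group

end Bicrossed

theorem unified_product_iso_bicrossed_product_iff_general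
    (Ω : ExtendingDatum H S)
    {G : Type*} [Group G] (rho' : G → H → H) (act' : G → H → G)
    (hla1 : ∀ h : H, rho' 1 h = h)
    (hra2 : ∀ (g : G) (h₁ h₂ : H), act' g (h₁ * h₂) = act' (act' g h₁) h₂)
    (hc1 : ∀ (g : G) (h₁ h₂ : H),
      rho' g (h₁ * h₂) = rho' g h₁ * rho' (act' g h₁) h₂)
    (hc2 : ∀ (g₁ g₂ : G) (h : H),
      act' (g₁ * g₂) h = act' g₁ (rho' g₂ h) * act' g₂ h) :
    (∃ ψ : H × S → H × G,
        Function.Bijective ψ ∧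
        (∀ a b : H × S,
          ψ (Ω.Mul a b)
            = ((ψ a).1 * rho' (ψ a).2 (ψ b).1, act' (ψ a).2 (ψ b).1 * (ψ b).2)) ∧
        (∀ h : H, ψ (h, Ω.one) = (h, 1))) ↔
      (∃ (r : S → H) (v : S → G),
        r Ω.one = 1 ∧ v Ω.one = 1 ∧ Function.Bijective v ∧
        (∀ (s : S) (h : H), v (Ω.act s h) = act' (v s) h) ∧
        (∀ (s : S) (h : H), Ω.rho s h * r (Ω.act s h) = r s * rho' (v s) h) ∧
        (∀ s₁ s₂ : S, v (Ω.mul s₁ s₂) = act' (v s₁) (r s₂) * v s₂) ∧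
        (∀ s₁ s₂ : S,
          Ω.f s₁ s₂ = r s₁ * rho' (v s₁) (r s₂) * (r (Ω.mul s₁ s₂))⁻¹)) := by
  constructor
  · rintro ⟨ψ, hbij, hmul, hunit⟩
    obtain ⟨r, v, rfl⟩ :=
      eq_twistedProdMap_of_map_mul hla1 (act_one_left_eq_one hla1 hc2) hmul hunit
    obtain ⟨hr, hv⟩ := (twistedProdMap_mk_eq_mk_one_iff Ω.one).1 hunit
    exact ⟨r, v, hr, hv, twistedProdMap_bijective_iff.1 hbij,
      isBicrossedTwist_of_map_mul hr hv hmul⟩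
  · rintro ⟨r, v, hr, hv, hbij, hrv⟩
    exact ⟨twistedProdMap r v, twistedProdMap_bijective_iff.2 hbij,
      IsBicrossedTwist.map_mul hrv hra2 hc1,
      (twistedProdMap_mk_eq_mk_one_iff Ω.one).2 ⟨hr, hv⟩⟩

/-- **(Corollary: when a unified product is a bicrossed product, stabilizing `H`).**
Let `Ω(H)` be a group extending structure of `H` and `(H, G, ▷', ◁')` a matched pair
of groups, with bicrossed product `H ⋈ G` (multiplication
`(h₁, g₁)(h₂, g₂) = (h₁ (g₁ ▷' h₂), (g₁ ◁' h₂) g₂)` on `H × G`). Then there exists an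
isomorphism of groups `ψ : H ⋉ S → H ⋈ G` with `ψ (h, 1_S) = (h, 1_G)` if and only if
there exist a unitary map `r : S → H` and a bijective unitary map `v : S → G` with
`v (s ◁ h) = v(s) ◁' h` (an isomorphism of right `H`-sets), such that
`(s ▷ h) r(s ◁ h) = r(s) (v(s) ▷' h)`, `v(s₁ ∗ s₂) = (v(s₁) ◁' r(s₂)) v(s₂)` and
`f(s₁, s₂) = r(s₁) (v(s₁) ▷' r(s₂)) r(s₁ ∗ s₂)⁻¹`. -/
theorem unified_product_iso_bicrossed_product_iff
    (Ω : ExtendingDatum H S) (hΩ : IsGroupExtendingStructure Ω)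
    {G : Type*} [Group G] (rho' : G → H → H) (act' : G → H → G)
    (hla1 : ∀ h : H, rho' 1 h = h)
    (hla2 : ∀ (g₁ g₂ : G) (h : H), rho' (g₁ * g₂) h = rho' g₁ (rho' g₂ h))
    (hra1 : ∀ g : G, act' g 1 = g)
    (hra2 : ∀ (g : G) (h₁ h₂ : H), act' g (h₁ * h₂) = act' (act' g h₁) h₂)
    (hc1 : ∀ (g : G) (h₁ h₂ : H),
      rho' g (h₁ * h₂) = rho' g h₁ * rho' (act' g h₁) h₂)
    (hc2 : ∀ (g₁ g₂ : G) (h : H),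
      act' (g₁ * g₂) h = act' g₁ (rho' g₂ h) * act' g₂ h) :
    (∃ ψ : H × S → H × G,
        Function.Bijective ψ ∧
        (∀ a b : H × S,
          ψ (Ω.Mul a b)
            = ((ψ a).1 * rho' (ψ a).2 (ψ b).1, act' (ψ a).2 (ψ b).1 * (ψ b).2)) ∧
        (∀ h : H, ψ (h, Ω.one) = (h, 1))) ↔
      (∃ (r : S → H) (v : S → G),
        r Ω.one = 1 ∧ v Ω.one = 1 ∧ Function.Bijective v ∧
        (∀ (s : S) (h : H), v (Ω.act s h) = act' (v s) h) ∧
        (∀ (s : S) (h : H), Ω.rho s h * r (Ω.act s h) = r s * rho' (v s) h) ∧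
        (∀ s₁ s₂ : S, v (Ω.mul s₁ s₂) = act' (v s₁) (r s₂) * v s₂) ∧
        (∀ s₁ s₂ : S,
          Ω.f s₁ s₂ = r s₁ * rho' (v s₁) (r s₂) * (r (Ω.mul s₁ s₂))⁻¹)) :=
  unified_product_iso_bicrossed_product_iff_general Ω rho' act' hla1 hra2 hc1 hc2
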